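/- arXiv:2111.05236 — 5 statements merged into one kernel-verified Lean document; each statement's English description precedes it below -/
import Mathlib

section
/- Let G be a locally compact Hausdorff topological group, μ a left Haar measure on G, and ν the right Haar measure defined by ν(E) = μ(E⁻¹). For all nonempty compact sets A, B ⊆ G of positive measure, ν(A·B⁻¹)·μ(A·B⁻¹) ≥ ν(A)·μ(B⁻¹); equivalently, the nonunimodular Ruzsa distance satisfies d(A,B) ≥ 0. -/
/-!
A left-invariant measure cannot decrease when a set `S` is enlarged to `A * S` with `A`
nonempty, since `A * S` contains a left translate `a • S`; symmetrically a right-invariant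
measure cannot decrease from `S` to `S * B`. Applied to the left Haar measure `μ` with
`S = B⁻¹` and to the right Haar measure `ν = μ.inv` with `S = A`, this gives
`μ(B⁻¹) ≤ μ(A·B⁻¹)` and `ν(A) ≤ ν(A·B⁻¹)`, and the product inequality follows.
-/

open Set Pointwise Function MeasureTheory
open scoped ENNReal

/-- The nonunimodular Ruzsa distance
`d(A,B) = log₂( ν(A·B⁻¹)·μ(A·B⁻¹) / (ν(A)·μ(B⁻¹)) )`, where `μ` is a left Haar measure and
`ν` is the right Haar measure `ν(E) = μ(E⁻¹)`. -/
noncomputable def ruzsaDist {G : Type*} [Group G] [MeasurableSpace G]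
    (μ ν : Measure G) (A B : Set G) : ℝ :=
  Real.logb 2 (((ν (A * B⁻¹)).toReal * (μ (A * B⁻¹)).toReal) /
    ((ν A).toReal * (μ B⁻¹).toReal))

namespace MeasureTheory

variable {G : Type*} [Group G] [MeasurableSpace G]

@[to_additive]
theorem measure_le_measure_mul_left (μ : Measure G) [μ.IsMulLeftInvariant] {A : Set G} {a : G}
    (ha : a ∈ A) (S : Set G) : μ S ≤ μ (A * S) :=
  calc μ S = μ (a • S) := (measure_smul μ a S).symm
    _ ≤ μ (A * S) := measure_mono (smul_set_subset_mul ha)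

@[to_additive]
theorem measure_le_measure_mul_right (ν : Measure G) [ν.IsMulRightInvariant] (S : Set G)
    {B : Set G} {b : G} (hb : b ∈ B) : ν S ≤ ν (S * B) :=
  calc ν S = ν (MulOpposite.op b • S) := (measure_smul ν (MulOpposite.op b) S).symm
    _ ≤ ν (S * B) := measure_mono (op_smul_set_subset_mul hb)

end MeasureTheory

theorem ruzsaDist_nonneg_of_le {G : Type*} [Group G] [MeasurableSpace G]
    {μ ν : Measure G} {A B : Set G}
    (hle : ν A * μ B⁻¹ ≤ ν (A * B⁻¹) * μ (A * B⁻¹))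
    (hfin : ν (A * B⁻¹) * μ (A * B⁻¹) ≠ ∞) : 0 ≤ ruzsaDist μ ν A B := by
  unfold ruzsaDist
  rw [← ENNReal.toReal_mul, ← ENNReal.toReal_mul]
  rcases (ENNReal.toReal_nonneg (a := ν A * μ B⁻¹)).eq_or_lt with hzero | hpos
  · rw [← hzero, div_zero, Real.logb_zero]
  · exact Real.logb_nonneg one_lt_two <|
      (one_le_div hpos).2 (ENNReal.toReal_mono hfin hle)

theorem ruzsaDist_nonneg_general
    {G : Type*} [Group G] [TopologicalSpace G] [IsTopologicalGroup G]
    [MeasurableSpace G] [BorelSpace G]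
    (μ ν : Measure G) [μ.IsHaarMeasure] (hν : ∀ E : Set G, ν E = μ E⁻¹)
    (A B : Set G) (hAc : IsCompact A) (hBc : IsCompact B)
    (hAne : A.Nonempty) (hBne : B.Nonempty) :
    ν A * μ B⁻¹ ≤ ν (A * B⁻¹) * μ (A * B⁻¹) ∧ 0 ≤ ruzsaDist μ ν A B := by
  obtain rfl : ν = μ.inv := Measure.ext fun E _ => by rw [hν, Measure.inv_apply]
  obtain ⟨a, ha⟩ := hAne
  obtain ⟨b, hb⟩ := hBne
  have hle : μ.inv A * μ B⁻¹ ≤ μ.inv (A * B⁻¹) * μ (A * B⁻¹) :=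
    mul_le_mul' (measure_le_measure_mul_right μ.inv A (inv_mem_inv.2 hb))
      (measure_le_measure_mul_left μ ha B⁻¹)
  have hABc : IsCompact (A * B⁻¹) := hAc.mul hBc.inv
  exact ⟨hle, ruzsaDist_nonneg_of_le hle
    (ENNReal.mul_ne_top hABc.measure_lt_top.ne hABc.measure_lt_top.ne)⟩

/-- **Nonnegativity of the nonunimodular Ruzsa distance.**
For a left Haar measure `μ` on a locally compact Hausdorff group `G` and the right Haar
measure `ν(E) = μ(E⁻¹)`, all nonempty compact `A, B` of positive measure satisfy
`ν(A·B⁻¹)·μ(A·B⁻¹) ≥ ν(A)·μ(B⁻¹)`; equivalently `d(A,B) ≥ 0`. -/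
theorem ruzsaDist_nonneg
    {G : Type*} [Group G] [TopologicalSpace G] [IsTopologicalGroup G]
    [LocallyCompactSpace G] [T2Space G] [MeasurableSpace G] [BorelSpace G]
    (μ ν : Measure G) [μ.IsHaarMeasure] (hν : ∀ E : Set G, ν E = μ E⁻¹)
    (A B : Set G) (hAc : IsCompact A) (hBc : IsCompact B)
    (hAne : A.Nonempty) (hBne : B.Nonempty) (hA0 : 0 < μ A) (hB0 : 0 < μ B) :
    ν A * μ B⁻¹ ≤ ν (A * B⁻¹) * μ (A * B⁻¹) ∧ 0 ≤ ruzsaDist μ ν A B :=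
  ruzsaDist_nonneg_general μ ν hν A B hAc hBc hAne hBne
end

section
/- Let G be a locally compact Hausdorff topological group, μ a left Haar measure on G, and ν the right Haar measure defined by ν(E) = μ(E⁻¹). For all nonempty compact sets A, B ⊆ G of positive measure and all a, b ∈ G, the nonunimodular Ruzsa distance is invariant under left translations: d(aA, bB) = d(A, B); equivalently, ν(aA·B⁻¹b⁻¹)·μ(aA·B⁻¹b⁻¹) / ( ν(aA)·μ(B⁻¹b⁻¹) ) = ν(A·B⁻¹)·μ(A·B⁻¹) / ( ν(A)·μ(B⁻¹) ). -/
open Set Pointwise Function MeasureTheory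
open scoped ENNReal

/-!
Right translation by `g` multiplies a left Haar measure `μ` by the modular character `Δ(g⁻¹)` on
sets with compact closure (uniqueness of Haar measure), and left translation does not change it.
Since `ν = μ.inv`, the roles swap for `ν`: left translation by `g` multiplies it by `Δ(g)`. Hence
`aA·B⁻¹b⁻¹` gains the factor `Δ(a)` under `ν` and `Δ(b)` under `μ`, exactly the factors gained by
`ν(aA)` and `μ(B⁻¹b⁻¹)`, and the ratio defining the distance is unchanged.
-/

namespace MeasureTheory.Measure

section Translation

variable {G : Type*} [Group G] [MeasurableSpace G] [MeasurableMul G]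

lemma measure_singleton_mul (μ : Measure G) [IsMulLeftInvariant μ] (g : G) (s : Set G) :
    μ ({g} * s) = μ s := by
  rw [singleton_mul, image_mul_left, measure_preimage_mul]

lemma measure_mul_singleton (μ : Measure G) [IsMulRightInvariant μ] (s : Set G) (g : G) :
    μ (s * {g}) = μ s := by
  rw [mul_singleton, image_mul_right, measure_preimage_mul_right]

end Translation

variable {G : Type*} [Group G] [TopologicalSpace G] [IsTopologicalGroup G] [LocallyCompactSpace G]
  [MeasurableSpace G] [BorelSpace G] (μ : Measure G) [IsHaarMeasure μ]

lemma measure_mul_singleton_of_isCompact_closure {s : Set G} (hs : IsCompact (closure s))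
    (g : G) : μ (s * {g}) = modularCharacter g⁻¹ * μ s := by
  have h := measure_isMulInvariant_eq_smul_of_isCompact_closure (map (· * g⁻¹) μ) μ hs
  rw [← modularCharacterFun_eq_haarScalarFactor] at h
  rw [mul_singleton, image_mul_right, ← MeasurableEquiv.coe_mulRight,
    ← MeasurableEquiv.map_apply]
  exact h

lemma inv_singleton_mul_of_isCompact_closure {s : Set G} (hs : IsCompact (closure s)) (g : G) :
    μ.inv ({g} * s) = modularCharacter g * μ.inv s := by
  have hs' : IsCompact (closure s⁻¹) := by rw [← inv_closure]; exact hs.inv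
  rw [inv_apply, inv_apply, mul_inv_rev, inv_singleton,
    measure_mul_singleton_of_isCompact_closure μ hs', inv_inv]

lemma measure_singleton_mul_mul_singleton_of_isCompact_closure {s : Set G}
    (hs : IsCompact (closure s)) (g h : G) :
    μ ({g} * s * {h}) = modularCharacter h⁻¹ * μ s := by
  rw [mul_assoc, measure_singleton_mul, measure_mul_singleton_of_isCompact_closure μ hs]

lemma inv_singleton_mul_mul_singleton_of_isCompact_closure {s : Set G}
    (hs : IsCompact (closure s)) (g h : G) :
    μ.inv ({g} * s * {h}) = modularCharacter g * μ.inv s := by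
  rw [measure_mul_singleton, inv_singleton_mul_of_isCompact_closure μ hs]

end MeasureTheory.Measure

lemma ENNReal.mul_mul_div_mul_mul_cancel {c d : ℝ≥0∞} (hc : c ≠ 0) (hc' : c ≠ ∞) (hd : d ≠ 0)
    (hd' : d ≠ ∞) (x y z w : ℝ≥0∞) : c * x * (d * y) / (c * z * (d * w)) = x * y / (z * w) := by
  rw [mul_mul_mul_comm c x, mul_mul_mul_comm c z, ENNReal.mul_div_mul_left _ _ (mul_ne_zero hc hd)
    (ENNReal.mul_ne_top hc' hd')]

lemma ruzsaDist_eq_logb_toReal {G : Type*} [Group G] [MeasurableSpace G] (μ ν : Measure G)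
    (A B : Set G) :
    ruzsaDist μ ν A B = Real.logb 2 (ν (A * B⁻¹) * μ (A * B⁻¹) / (ν A * μ B⁻¹)).toReal := by
  simp only [ruzsaDist, ENNReal.toReal_div, ENNReal.toReal_mul]

open Measure

theorem ruzsaDist_translation_invariant_general
    {G : Type*} [Group G] [TopologicalSpace G] [IsTopologicalGroup G]
    [LocallyCompactSpace G] [MeasurableSpace G] [BorelSpace G]
    (μ ν : Measure G) [μ.IsHaarMeasure] (hν : ∀ E : Set G, ν E = μ E⁻¹)
    (A B : Set G) (hAc : IsCompact A) (hBc : IsCompact B)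
    (a b : G) :
    ruzsaDist μ ν ({a} * A) ({b} * B) = ruzsaDist μ ν A B ∧
    ν ({a} * A * B⁻¹ * {b⁻¹}) * μ ({a} * A * B⁻¹ * {b⁻¹}) /
        (ν ({a} * A) * μ (B⁻¹ * {b⁻¹})) =
      ν (A * B⁻¹) * μ (A * B⁻¹) / (ν A * μ B⁻¹) := by
  obtain rfl : ν = μ.inv := ext fun E _ ↦ by rw [hν, inv_apply]
  have hΔ (g : G) : (modularCharacter g : ℝ≥0∞) ≠ 0 :=
    ENNReal.coe_ne_zero.2 (modularCharacterFun_pos g).ne'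
  have hratio : μ.inv ({a} * A * B⁻¹ * {b⁻¹}) * μ ({a} * A * B⁻¹ * {b⁻¹}) /
        (μ.inv ({a} * A) * μ (B⁻¹ * {b⁻¹})) =
      μ.inv (A * B⁻¹) * μ (A * B⁻¹) / (μ.inv A * μ B⁻¹) := by
    have hAB : IsCompact (closure (A * B⁻¹)) := (hAc.mul hBc.inv).closure
    rw [mul_assoc {a} A, inv_singleton_mul_mul_singleton_of_isCompact_closure μ hAB,
      measure_singleton_mul_mul_singleton_of_isCompact_closure μ hAB,
      inv_singleton_mul_of_isCompact_closure μ hAc.closure,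
      measure_mul_singleton_of_isCompact_closure μ hBc.inv.closure]
    exact ENNReal.mul_mul_div_mul_mul_cancel (hΔ a) ENNReal.coe_ne_top (hΔ b⁻¹⁻¹)
      ENNReal.coe_ne_top _ _ _ _
  refine ⟨?_, hratio⟩
  rw [ruzsaDist_eq_logb_toReal, ruzsaDist_eq_logb_toReal, mul_inv_rev, inv_singleton,
    ← mul_assoc, hratio]

/-- **Left translation invariance of the nonunimodular Ruzsa distance.**
For a left Haar measure `μ` on a locally compact Hausdorff group `G` and the right Haar
measure `ν(E) = μ(E⁻¹)`, all nonempty compact `A, B` of positive measure and all `a, b ∈ G`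
satisfy `d(aA, bB) = d(A, B)`; equivalently
`ν(aA·B⁻¹b⁻¹)·μ(aA·B⁻¹b⁻¹)/(ν(aA)·μ(B⁻¹b⁻¹)) = ν(A·B⁻¹)·μ(A·B⁻¹)/(ν(A)·μ(B⁻¹))`. -/
theorem ruzsaDist_translation_invariant
    {G : Type*} [Group G] [TopologicalSpace G] [IsTopologicalGroup G]
    [LocallyCompactSpace G] [T2Space G] [MeasurableSpace G] [BorelSpace G]
    (μ ν : Measure G) [μ.IsHaarMeasure] (hν : ∀ E : Set G, ν E = μ E⁻¹)
    (A B : Set G) (hAc : IsCompact A) (hBc : IsCompact B)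
    (hAne : A.Nonempty) (hBne : B.Nonempty) (hA0 : 0 < μ A) (hB0 : 0 < μ B)
    (a b : G) :
    ruzsaDist μ ν ({a} * A) ({b} * B) = ruzsaDist μ ν A B ∧
    ν ({a} * A * B⁻¹ * {b⁻¹}) * μ ({a} * A * B⁻¹ * {b⁻¹}) /
        (ν ({a} * A) * μ (B⁻¹ * {b⁻¹})) =
      ν (A * B⁻¹) * μ (A * B⁻¹) / (ν A * μ B⁻¹) :=
  ruzsaDist_translation_invariant_general μ ν hν A B hAc hBc a b
end

section
/- Let G be a locally compact Hausdorff topological group with left Haar measure μ, let K ≥ 1 be a real number, and let A, B ⊆ G be nonempty compact sets with μ(B) > 0. If μ(A·B) ≤ K·μ(B), then there exists a finite set Ω ⊆ A with |Ω| ≤ K such that A ⊆ Ω·B·B⁻¹. -/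
/-! Choose a finite `F ⊆ A` whose translates `ω • B` are pairwise disjoint and which cannot be
enlarged. The translates all lie in `A * B`, so `|F| μ(B) ≤ μ(A * B) ≤ K μ(B)`, which bounds `|F|`
by `K` and makes such a maximal family exist. By maximality, every `a • B` with `a ∈ A` meets some
`ω • B` with `ω ∈ F`, i.e. `a ∈ ω B B⁻¹`. -/

open Set Pointwise MeasureTheory
open scoped ENNReal

theorem exists_maximal_finset_of_card_le {α : Type*} [DecidableEq α] {P : Finset α → Prop} {N : ℕ}
    (h₀ : P ∅) (hN : ∀ F, P F → F.card ≤ N) :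
    ∃ F, P F ∧ ∀ a ∉ F, ¬P (insert a F) := by
  set S : Set ℕ := {n | ∃ F, P F ∧ F.card = n}
  have hS : BddAbove S := ⟨N, by rintro _ ⟨F, hF, rfl⟩; exact hN F hF⟩
  obtain ⟨F, hF, hcard⟩ : sSup S ∈ S := Nat.sSup_mem ⟨0, ∅, h₀, rfl⟩ hS
  refine ⟨F, hF, fun a ha hPa => ?_⟩
  have := le_csSup hS ⟨_, hPa, rfl⟩
  rw [Finset.card_insert_of_notMem ha, ← hcard] at this
  omega

section Group

variable {G : Type*} [Group G]

theorem mem_smul_mul_inv_of_not_disjoint_smul {a b : G} {B : Set G}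
    (h : ¬Disjoint (a • B) (b • B)) : a ∈ b • (B * B⁻¹) := by
  obtain ⟨_, ⟨β, hβ, rfl⟩, ⟨β', hβ', hββ'⟩⟩ := not_disjoint_iff.mp h
  refine ⟨β' * β⁻¹, mul_mem_mul hβ' (inv_mem_inv.mpr hβ), ?_⟩
  simp only [smul_eq_mul] at hββ' ⊢
  rw [← mul_assoc, hββ', mul_inv_cancel_right]

theorem subset_mul_mul_inv_of_forall_not_disjoint {A B F : Set G}
    (h : ∀ a ∈ A, ∃ ω ∈ F, ¬Disjoint (a • B) (ω • B)) : A ⊆ F * B * B⁻¹ := by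
  intro a ha
  obtain ⟨ω, hω, hdisj⟩ := h a ha
  rw [mul_assoc]
  exact smul_set_subset_mul hω (mem_smul_mul_inv_of_not_disjoint_smul hdisj)

theorem subset_mul_mul_inv_of_maximal {A B F : Set G} (hB : B.Nonempty)
    (hF : F.PairwiseDisjoint (· • B))
    (hmax : ∀ a ∈ A, a ∉ F → ¬(insert a F).PairwiseDisjoint (· • B)) :
    A ⊆ F * B * B⁻¹ := by
  refine subset_mul_mul_inv_of_forall_not_disjoint fun a ha => ?_
  by_cases haF : a ∈ F
  · exact ⟨a, haF, by simpa [disjoint_self, ← nonempty_iff_ne_empty] using hB⟩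
  · have := hmax a ha haF
    rw [pairwiseDisjoint_insert_of_notMem haF] at this
    push Not at this
    exact this hF

section Measure

variable [MeasurableSpace G] [MeasurableMul G] (μ : Measure G) [μ.IsMulLeftInvariant]
  {A B : Set G} {F : Finset G}

theorem card_mul_measure_le_measure_mul (hB : MeasurableSet B) (hFA : ↑F ⊆ A)
    (hF : (F : Set G).PairwiseDisjoint (· • B)) :
    F.card * μ B ≤ μ (A * B) := calc
  F.card * μ B = μ (⋃ ω ∈ F, ω • B) := by
    rw [measure_biUnion_finset hF fun ω _ => hB.const_smul ω]
    simp [measure_smul]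
  _ ≤ μ (A * B) := measure_mono <| iUnion₂_subset fun _ hω => smul_set_subset_mul (hFA hω)

theorem card_le_of_pairwiseDisjoint_smul {K : ℝ} (hK : 0 ≤ K) (hB : MeasurableSet B)
    (hB₀ : μ B ≠ 0) (hB_top : μ B ≠ ∞) (hcov : μ (A * B) ≤ ENNReal.ofReal K * μ B)
    (hFA : ↑F ⊆ A) (hF : (F : Set G).PairwiseDisjoint (· • B)) :
    (F.card : ℝ) ≤ K := by
  have : (F.card : ℝ≥0∞) ≤ ENNReal.ofReal K :=
    (ENNReal.mul_le_mul_iff_left hB₀ hB_top).mp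
      ((card_mul_measure_le_measure_mul μ hB hFA hF).trans hcov)
  rwa [← ENNReal.ofReal_natCast, ENNReal.ofReal_le_ofReal_iff hK] at this

end Measure

end Group

theorem ruzsa_covering_left_general
    {G : Type*} [Group G] [TopologicalSpace G] [IsTopologicalGroup G]
    [T2Space G] [MeasurableSpace G] [BorelSpace G]
    (μ : Measure G) [μ.IsHaarMeasure]
    (K : ℝ) (hK : 1 ≤ K)
    (A B : Set G) (hBc : IsCompact B) (hB0 : 0 < μ B)
    (hcov : μ (A * B) ≤ ENNReal.ofReal K * μ B) :
    ∃ Ω : Finset G, ↑Ω ⊆ A ∧ (Ω.card : ℝ) ≤ K ∧ A ⊆ ↑Ω * B * B⁻¹ := by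
  classical
  have hcard : ∀ F : Finset G, ↑F ⊆ A → (F : Set G).PairwiseDisjoint (· • B) → (F.card : ℝ) ≤ K :=
    fun _ => card_le_of_pairwiseDisjoint_smul μ (zero_le_one.trans hK) hBc.measurableSet hB0.ne'
      hBc.measure_lt_top.ne hcov
  obtain ⟨F, ⟨hFA, hF⟩, hmax⟩ := exists_maximal_finset_of_card_le (N := ⌊K⌋₊)
    (P := fun F : Finset G => ↑F ⊆ A ∧ (F : Set G).PairwiseDisjoint (· • B))
    (by simp) fun F hF => Nat.le_floor (hcard F hF.1 hF.2)
  refine ⟨F, hFA, hcard F hFA hF, subset_mul_mul_inv_of_maximal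
    (nonempty_of_measure_ne_zero hB0.ne') hF fun a ha haF hins => hmax a haF ⟨?_, ?_⟩⟩
  all_goals rw [Finset.coe_insert]
  exacts [insert_subset ha hFA, hins]

/-- **Ruzsa covering lemma (left Haar version).**
If `μ` is a left Haar measure on a locally compact Hausdorff group `G`, `K ≥ 1`, and
`A, B` are nonempty compact sets with `μ(B) > 0` and `μ(A·B) ≤ K·μ(B)`, then there is a
finite set `Ω ⊆ A` with `|Ω| ≤ K` and `A ⊆ Ω·B·B⁻¹`. -/
theorem ruzsa_covering_left
    {G : Type*} [Group G] [TopologicalSpace G] [IsTopologicalGroup G]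
    [LocallyCompactSpace G] [T2Space G] [MeasurableSpace G] [BorelSpace G]
    (μ : Measure G) [μ.IsHaarMeasure]
    (K : ℝ) (hK : 1 ≤ K)
    (A B : Set G) (hAc : IsCompact A) (hBc : IsCompact B)
    (hAne : A.Nonempty) (hBne : B.Nonempty) (hB0 : 0 < μ B)
    (hcov : μ (A * B) ≤ ENNReal.ofReal K * μ B) :
    ∃ Ω : Finset G, ↑Ω ⊆ A ∧ (Ω.card : ℝ) ≤ K ∧ A ⊆ ↑Ω * B * B⁻¹ :=
  ruzsa_covering_left_general μ K hK A B hBc hB0 hcov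
end

section
/- Let G be a locally compact Hausdorff topological group, μ a left Haar measure on G, and ν the right Haar measure defined by ν(E) = μ(E⁻¹). Let A ⊆ G be compact with ν(A) > 0 and let ε be a real number with 0 < ε ≤ ν(A). Then the approximate measure stabilizer S = {g ∈ G : ν(A \ Ag) < ε} contains the identity of G, is an open subset of G, is precompact (has compact closure), and is symmetric, i.e., S = S⁻¹. -/
open Set Pointwise Function MeasureTheory
open scoped ENNReal

/-!
Put `K = A⁻¹`, so that `ν (A \ A * {g}) = μ (K \ g⁻¹ • K)`, and study `f g = μ (K \ g • K)` for
the left-invariant measure `μ`. Since `g • K` and `K` have the same finite measure, `f` is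
invariant under `g ↦ g⁻¹`; left invariance and the triangle inequality for `\` make `f`
subadditive; and `f g → 0` as `g → 1`, because up to a constant `μ` agrees on relatively compact
sets with the inner regular Haar measure `haar`. Hence `{f < ε}` is symmetric, and it is open
since `f g ≤ f g₀ + f (g₀⁻¹ * g)`. Finally `f g < ε ≤ μ K` forces `K` and `g • K` to meet,
so `{f < ε} ⊆ K * K⁻¹`.
-/

open Filter Topology

namespace MeasureTheory

variable {G : Type*} [Group G] [MeasurableSpace G] {μ : Measure G} {K : Set G}

theorem setOf_measure_sdiff_smul_lt_subset {ε : ℝ≥0∞} (hε : ε ≤ μ K) :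
    {g | μ (K \ g • K) < ε} ⊆ K * K⁻¹ := by
  intro g (hg : μ (K \ g • K) < ε)
  obtain ⟨a, b, ⟨ha, hb⟩, rfl⟩ := smul_inter_nonempty_iff.mp <|
    not_disjoint_iff_nonempty_inter.mp fun hdisj => by
      rw [hdisj.symm.sdiff_eq_left] at hg
      exact hε.not_gt hg
  exact mul_mem_mul ha (inv_mem_inv.mpr hb)

variable [μ.IsMulLeftInvariant]

theorem measure_sdiff_smul_mul_le (g h : G) :
    μ (K \ (g * h) • K) ≤ μ (K \ g • K) + μ (K \ h • K) :=
  calc μ (K \ (g * h) • K)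
      ≤ μ (K \ g • K ∪ g • K \ (g * h) • K) := measure_mono (sdiff_triangle _ _ _)
    _ ≤ μ (K \ g • K) + μ (g • K \ (g * h) • K) := measure_union_le _ _
    _ = μ (K \ g • K) + μ (K \ h • K) := by rw [mul_smul, ← smul_set_sdiff, measure_smul]

theorem measure_sdiff_smul_comm [MeasurableMul G] (hK : MeasurableSet K) (hfin : μ K ≠ ∞)
    (g : G) :
    μ (K \ g • K) = μ (g • K \ K) :=
  measure_sdiff_symm hK.nullMeasurableSet (hK.const_smul g).nullMeasurableSet
    (measure_smul μ g K).symm (measure_ne_top_of_subset inter_subset_left hfin)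

theorem measure_sdiff_inv_smul_self [MeasurableMul G] (hK : MeasurableSet K) (hfin : μ K ≠ ∞)
    (g : G) :
    μ (K \ g⁻¹ • K) = μ (K \ g • K) := by
  rw [measure_sdiff_inv_smul, measure_sdiff_smul_comm hK hfin]

variable [TopologicalSpace G] [IsTopologicalGroup G] [LocallyCompactSpace G] [T2Space G]
  [BorelSpace G] [IsFiniteMeasureOnCompacts μ]

theorem tendsto_measure_smul_sdiff_nhds_one (hK : IsCompact K) :
    Tendsto (fun g : G => μ (g • K \ K)) (𝓝 1) (𝓝 0) := by
  have hhaar := ENNReal.Tendsto.const_mul (a := Measure.haarScalarFactor μ Measure.haar)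
    (tendsto_measure_smul_sdiff_isCompact_isClosed (μ := Measure.haar) hK hK.isClosed)
    (Or.inr ENNReal.coe_ne_top)
  rw [mul_zero] at hhaar
  refine hhaar.congr fun g => ?_
  exact (Measure.measure_isMulInvariant_eq_smul_of_isCompact_closure μ Measure.haar
    ((hK.smul g).closure_of_subset sdiff_subset)).symm

theorem isOpen_setOf_measure_sdiff_smul_lt (hK : IsCompact K) (ε : ℝ≥0∞) :
    IsOpen {g : G | μ (K \ g • K) < ε} := by
  have hfin := hK.measure_lt_top (μ := μ) |>.ne
  refine isOpen_iff_mem_nhds.mpr fun (g₀ : G) (hg₀ : μ (K \ g₀ • K) < ε) => ?_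
  have hto : Tendsto (fun g : G => μ (K \ (g₀⁻¹ * g) • K)) (𝓝 g₀) (𝓝 0) := by
    simp_rw [measure_sdiff_smul_comm hK.isClosed.measurableSet hfin]
    refine (tendsto_measure_smul_sdiff_nhds_one hK).comp ?_
    simpa using ((continuous_const_mul g₀⁻¹).tendsto g₀)
  filter_upwards [(hto.const_add (μ (K \ g₀ • K))).eventually_lt_const (by simpa using hg₀)]
    with g hg
  simpa using (measure_sdiff_smul_mul_le g₀ (g₀⁻¹ * g)).trans_lt hg

end MeasureTheory

theorem approx_stabilizer_basic_general
    {G : Type*} [Group G] [TopologicalSpace G] [IsTopologicalGroup G]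
    [LocallyCompactSpace G] [T2Space G] [MeasurableSpace G] [BorelSpace G]
    (μ ν : Measure G) [μ.IsHaarMeasure] (hν : ∀ E : Set G, ν E = μ E⁻¹)
    (A : Set G) (hAc : IsCompact A)
    (ε : ℝ) (hε : 0 < ε) (hεA : ENNReal.ofReal ε ≤ ν A)
    (S : Set G) (hS : S = {g : G | ν (A \ (A * {g})) < ENNReal.ofReal ε}) :
    (1 : G) ∈ S ∧ IsOpen S ∧ IsCompact (closure S) ∧ S = S⁻¹ := by
  have hKm : MeasurableSet A⁻¹ := hAc.inv.isClosed.measurableSet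
  have hKfin : μ A⁻¹ ≠ ∞ := hAc.inv.measure_lt_top.ne
  have hSK : S = {g | μ (A⁻¹ \ g • A⁻¹) < ENNReal.ofReal ε} := by
    ext g
    have hinv : (A \ (A * {g}))⁻¹ = A⁻¹ \ g⁻¹ • A⁻¹ := by
      rw [show (A \ (A * {g}))⁻¹ = A⁻¹ \ (A * {g})⁻¹ from preimage_sdiff _ _ _, mul_inv_rev,
        inv_singleton, singleton_mul]
      rfl
    rw [hS, mem_ofPred_eq, mem_ofPred_eq, hν, hinv, measure_sdiff_inv_smul_self hKm hKfin]
  subst hSK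
  refine ⟨by simpa using hε, isOpen_setOf_measure_sdiff_smul_lt hAc.inv _, ?_, ?_⟩
  · exact (hAc.inv.mul hAc.inv.inv).closure_of_subset
      (setOf_measure_sdiff_smul_lt_subset (hεA.trans_eq (hν A)))
  · ext g
    simp [measure_sdiff_inv_smul_self hKm hKfin]

/-- **Basic properties of approximate measure stabilizers.**
Let `μ` be a left Haar measure on a locally compact Hausdorff group `G`, let `ν` be the right
Haar measure `ν(E) = μ(E⁻¹)`, let `A ⊆ G` be compact with `ν(A) > 0`, and let
`0 < ε ≤ ν(A)`.  Then the approximate measure stabilizer `S = {g : ν(A \ Ag) < ε}` contains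
the identity, is open, is precompact, and is symmetric. -/
theorem approx_stabilizer_basic
    {G : Type*} [Group G] [TopologicalSpace G] [IsTopologicalGroup G]
    [LocallyCompactSpace G] [T2Space G] [MeasurableSpace G] [BorelSpace G]
    (μ ν : Measure G) [μ.IsHaarMeasure] (hν : ∀ E : Set G, ν E = μ E⁻¹)
    (A : Set G) (hAc : IsCompact A) (hA0 : 0 < ν A)
    (ε : ℝ) (hε : 0 < ε) (hεA : ENNReal.ofReal ε ≤ ν A)
    (S : Set G) (hS : S = {g : G | ν (A \ (A * {g})) < ENNReal.ofReal ε}) :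
    (1 : G) ∈ S ∧ IsOpen S ∧ IsCompact (closure S) ∧ S = S⁻¹ :=
  approx_stabilizer_basic_general μ ν hν A hAc ε hε hεA S hS
end

section
/- Let G be a locally compact Hausdorff topological group, μ a left Haar measure on G, and ν the right Haar measure defined by ν(E) = μ(E⁻¹). Let K ≥ 1 and let A ⊆ G be a compact set with μ(A) > 0 such that ν(A·A⁻¹) ≤ K·μ(A) and max_{a∈A} Δ_G(a) = 1, where Δ_G is the modular function of G. Let S = {g ∈ G : ν(A \ Ag) < (2K−1)·ν(A)/(2K)}. Then ν(S) ≥ μ(A)/(2K). -/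
open Set Pointwise MeasureTheory
open scoped ENNReal

/-!
Since `Δ ≤ 1` on `A`, comparing `μ` with the left-invariant measure `Δ · ν` gives `μ(A) ≤ ν(A)`.
A point `g` lies outside `S` iff `ν(A ∩ Ag) ≤ ν(A)/(2K)`, and `S = S⁻¹`. For a maximal finite
`F ⊆ A` with `b⁻¹c ∉ S` for distinct `b, c ∈ F` we get `A ⊆ F·S`, hence `μ(A) ≤ |F|·ν(S)`.
The translates `Ab⁻¹`, `b ∈ F`, lie in `AA⁻¹` and pairwise overlap in measure at most `ν(A)/(2K)`,
so the Bonferroni inequality and `ν(AA⁻¹) ≤ K·μ(A) ≤ K·ν(A)` rule out `|F| = ⌊2K⌋ + 1`;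
therefore `|F| ≤ 2K`.
-/

lemma add_choose_two_div_lt_floor_add_one {K : ℝ} (hK : 0 < K) :
    K + ((⌊2 * K⌋₊ + 1).choose 2 : ℝ) / (2 * K) < ⌊2 * K⌋₊ + 1 := by
  have h1 : 2 * K < ⌊2 * K⌋₊ + 1 := Nat.lt_floor_add_one _
  have h2 : (⌊2 * K⌋₊ : ℝ) ≤ 2 * K := Nat.floor_le (by positivity)
  rw [Nat.cast_choose_two, ← sub_pos]
  push_cast
  field_simp
  nlinarith

lemma ENNReal.ofReal_sub_one_div_add_ofReal_one_div {t : ℝ} (ht : 1 ≤ t) :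
    ENNReal.ofReal ((t - 1) / t) + ENNReal.ofReal (1 / t) = 1 := by
  rw [← ENNReal.ofReal_add (div_nonneg (by linarith) (by linarith)) (by positivity), ← add_div,
    sub_add_cancel, div_self (by positivity), ENNReal.ofReal_one]

lemma Set.exists_finset_card_le_subset_biUnion_smul {G : Type*} [Group G] {A S : Set G} {N : ℕ}
    (hS_one : 1 ∈ S) (hS_inv : ∀ g ∈ S, g⁻¹ ∈ S)
    (hN : ∀ F : Finset G, (F : Set G) ⊆ A → (F : Set G).Pairwise (fun b c ↦ b⁻¹ * c ∉ S) →
      F.card ≠ N + 1) :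
    ∃ F : Finset G, F.card ≤ N ∧ A ⊆ ⋃ b ∈ F, b • S := by
  classical
  let P : ℕ → Prop := fun n ↦
    ∃ F : Finset G, (F : Set G) ⊆ A ∧ (F : Set G).Pairwise (fun b c ↦ b⁻¹ * c ∉ S) ∧ F.card = n
  have hP_le : ∀ n, P n → n ≤ N := by
    rintro n ⟨F, hFA, hF, rfl⟩
    by_contra! h
    obtain ⟨F', hF'F, hF'⟩ := Finset.exists_subset_card_eq (Nat.succ_le_of_lt h)
    exact hN F' ((Finset.coe_subset.mpr hF'F).trans hFA) (hF.mono (Finset.coe_subset.mpr hF'F)) hF'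
  -- a separated family of maximal size covers `A`
  obtain ⟨F, hFA, hF, hF_card⟩ : P (Nat.findGreatest P N) :=
    Nat.findGreatest_spec (Nat.zero_le N) ⟨∅, by simp, by simp, rfl⟩
  refine ⟨F, hF_card ▸ Nat.findGreatest_le N, fun a ha ↦ ?_⟩
  by_contra hcov
  simp only [mem_iUnion, not_exists, mem_smul_set_iff_inv_smul_mem, smul_eq_mul] at hcov
  have haF : a ∉ F := fun haF ↦ hcov a haF (by simpa using hS_one)
  have hP_succ : P (F.card + 1) := by
    refine ⟨insert a F, ?_, ?_, Finset.card_insert_of_notMem haF⟩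
    · simpa [insert_subset_iff] using ⟨ha, hFA⟩
    · rw [Finset.coe_insert]
      refine hF.insert_of_notMem haF fun b hb ↦ ⟨fun h ↦ hcov b hb ?_, hcov b hb⟩
      simpa using hS_inv _ h
  have := Nat.le_findGreatest (hP_le _ hP_succ) hP_succ
  omega

lemma MeasurableSet.mul_singleton {G : Type*} [Group G] [MeasurableSpace G] [MeasurableMul G]
    {s : Set G} (hs : MeasurableSet s) (g : G) : MeasurableSet (s * {g}) := by
  rw [Set.mul_singleton, image_mul_right]
  exact hs.preimage (measurable_mul_const _)

namespace MeasureTheory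

lemma measure_sdiff_lt_iff {α : Type*} [MeasurableSpace α] (ν : Measure α) {s t : Set α}
    (ht : MeasurableSet t) (hs : ν s ≠ ⊤) {a b : ℝ≥0∞} (ha : a ≠ ⊤) (hab : a + b = 1) :
    ν (s \ t) < a * ν s ↔ b * ν s < ν (s ∩ t) := by
  have hsplit : ν (s \ t) + ν (s ∩ t) = a * ν s + b * ν s := by
    rw [measure_sdiff_add_inter s ht, ← add_mul, hab, one_mul]
  rw [← ENNReal.add_lt_add_iff_right (measure_ne_top_of_subset inter_subset_left hs), hsplit,
    ENNReal.add_lt_add_iff_left (ENNReal.mul_ne_top ha hs)]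

lemma sum_measure_le_measure_biUnion_add {ι α : Type*} [MeasurableSpace α] (ν : Measure α)
    {C : ι → Set α} (hC : ∀ i, MeasurableSet (C i)) {ε : ℝ≥0∞} {s : Finset ι}
    (hs : (s : Set ι).Pairwise fun i j ↦ ν (C i ∩ C j) ≤ ε) :
    ∑ i ∈ s, ν (C i) ≤ ν (⋃ i ∈ s, C i) + s.card.choose 2 * ε := by
  classical
  induction s using Finset.induction_on with
  | empty => simp
  | insert a s ha ih =>
    have hinter : ν (C a ∩ ⋃ i ∈ s, C i) ≤ s.card * ε := by
      rw [inter_iUnion₂, ← nsmul_eq_mul]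
      refine (measure_biUnion_finset_le _ _).trans (Finset.sum_le_card_nsmul _ _ _ fun i hi ↦ ?_)
      exact hs (by simp) (by simp [hi]) (by rintro rfl; exact ha hi)
    calc ∑ i ∈ insert a s, ν (C i)
        ≤ ν (C a) + (ν (⋃ i ∈ s, C i) + s.card.choose 2 * ε) := by
          rw [Finset.sum_insert ha]
          gcongr
          exact ih (hs.mono (by simp))
      _ = ν (C a ∪ ⋃ i ∈ s, C i) + ν (C a ∩ ⋃ i ∈ s, C i) + s.card.choose 2 * ε := by
          rw [measure_union_add_inter' (hC a), add_assoc]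
      _ ≤ ν (C a ∪ ⋃ i ∈ s, C i) + s.card * ε + s.card.choose 2 * ε := by gcongr
      _ = ν (⋃ i ∈ insert a s, C i) + (insert a s).card.choose 2 * ε := by
          rw [Finset.set_biUnion_insert, Finset.card_insert_of_notMem ha, Nat.choose_succ_succ',
            Nat.choose_one_right]
          push_cast
          ring

lemma measure_le_card_mul_of_subset_biUnion_smul {G : Type*} [Group G] [MeasurableSpace G]
    (μ : Measure G) [μ.IsMulLeftInvariant] {A S : Set G} {F : Finset G}
    (hcov : A ⊆ ⋃ b ∈ F, b • S) : μ A ≤ F.card * μ S :=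
  calc μ A ≤ ∑ b ∈ F, μ (b • S) := (measure_mono hcov).trans (measure_biUnion_finset_le _ _)
    _ = F.card * μ S := by simp only [measure_smul, Finset.sum_const, nsmul_eq_mul]

section RightInvariant

variable {G : Type*} [Group G] [MeasurableSpace G] [MeasurableMul G]
  (ν : Measure G) [ν.IsMulRightInvariant]

lemma measure_mul_singleton (s : Set G) (g : G) : ν (s * {g}) = ν s := by
  rw [mul_singleton, image_mul_right]
  exact measure_preimage_mul_right ν g⁻¹ s

lemma measure_inter_mul_singleton (s t : Set G) (g : G) :
    ν (s ∩ (t * {g})) = ν (s * {g⁻¹} ∩ t) := by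
  rw [← measure_mul_singleton ν _ g⁻¹, mul_singleton, image_inter (mul_left_injective _),
    ← mul_singleton, ← mul_singleton, mul_assoc, singleton_mul_singleton, mul_inv_cancel,
    singleton_one, mul_one]

lemma measure_inter_mul_singleton_inv (s : Set G) (g : G) :
    ν (s ∩ (s * {g⁻¹})) = ν (s ∩ (s * {g})) := by
  rw [measure_inter_mul_singleton, inv_inv, inter_comm]

lemma measure_mul_singleton_inv_inter (s : Set G) (b c : G) :
    ν (s * {b⁻¹} ∩ (s * {c⁻¹})) = ν (s ∩ (s * {b⁻¹ * c})) := by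
  rw [measure_inter_mul_singleton, inv_inv, mul_assoc, singleton_mul_singleton, inter_comm]

lemma card_mul_measure_le_measure_mul_inv_add {A : Set G} (hA : MeasurableSet A) {ε : ℝ≥0∞}
    {F : Finset G} (hFA : (F : Set G) ⊆ A)
    (hF : (F : Set G).Pairwise fun b c ↦ ν (A ∩ (A * {b⁻¹ * c})) ≤ ε) :
    F.card * ν A ≤ ν (A * A⁻¹) + F.card.choose 2 * ε := by
  have hsub : ⋃ b ∈ F, A * {b⁻¹} ⊆ A * A⁻¹ := iUnion₂_subset fun b hb ↦
    mul_subset_mul_left (singleton_subset_iff.mpr (inv_mem_inv.mpr (hFA hb)))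
  calc (F.card : ℝ≥0∞) * ν A = ∑ b ∈ F, ν (A * {b⁻¹}) := by
        simp only [measure_mul_singleton, Finset.sum_const, nsmul_eq_mul]
    _ ≤ ν (⋃ b ∈ F, A * {b⁻¹}) + F.card.choose 2 * ε := by
        refine sum_measure_le_measure_biUnion_add ν (fun b ↦ hA.mul_singleton _)
          fun b hb c hc hbc ↦ ?_
        dsimp only
        rw [measure_mul_singleton_inv_inter]
        exact hF hb hc hbc
    _ ≤ ν (A * A⁻¹) + F.card.choose 2 * ε := by gcongr

lemma card_ne_floor_add_one_of_pairwise {A : Set G} (hA : MeasurableSet A) (hA₀ : ν A ≠ 0)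
    (hA_top : ν A ≠ ⊤) {K : ℝ} (hK : 0 < K) (hAA : ν (A * A⁻¹) ≤ ENNReal.ofReal K * ν A)
    {F : Finset G} (hFA : (F : Set G) ⊆ A)
    (hF : (F : Set G).Pairwise fun b c ↦
      ν (A ∩ (A * {b⁻¹ * c})) ≤ ENNReal.ofReal (1 / (2 * K)) * ν A) :
    F.card ≠ ⌊2 * K⌋₊ + 1 := by
  intro hcard
  have h := card_mul_measure_le_measure_mul_inv_add ν hA hFA hF
  rw [hcard] at h
  set n := ⌊2 * K⌋₊ + 1
  have h' : ENNReal.ofReal n * ν A ≤ ENNReal.ofReal (K + (n.choose 2 : ℝ) / (2 * K)) * ν A := by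
    calc ENNReal.ofReal n * ν A = n * ν A := by rw [ENNReal.ofReal_natCast]
      _ ≤ ENNReal.ofReal K * ν A + n.choose 2 * (ENNReal.ofReal (1 / (2 * K)) * ν A) :=
          h.trans (by gcongr)
      _ = ENNReal.ofReal (K + (n.choose 2 : ℝ) / (2 * K)) * ν A := by
          rw [← mul_assoc, ← add_mul, ← ENNReal.ofReal_natCast,
            ← ENNReal.ofReal_mul (by positivity), ← ENNReal.ofReal_add hK.le (by positivity),
            mul_one_div]
  rw [ENNReal.mul_le_mul_iff_left hA₀ hA_top, ENNReal.ofReal_le_ofReal_iff (by positivity)] at h'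
  exact (add_choose_two_div_lt_floor_add_one hK).not_ge (by exact_mod_cast h')

end RightInvariant

section Modular

variable {G : Type*} [Group G] [MeasurableSpace G] [MeasurableMul G] [MeasurableInv G]
  {μ : Measure G} {Δ : G → ℝ}

lemma map_mul_left_inv_eq_smul
    (hΔmod : ∀ E : Set G, MeasurableSet E → ∀ x : G,
      μ (E * {x}) = ENNReal.ofReal (Δ x) * μ E) (g : G) :
    μ.inv.map (g * ·) = ENNReal.ofReal (Δ g) • μ.inv := by
  ext F hF
  have hpre : ((g * ·) ⁻¹' F)⁻¹ = F⁻¹ * {g} := by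
    ext x
    simp
  rw [Measure.map_apply (measurable_const_mul g) hF, Measure.smul_apply, smul_eq_mul,
    Measure.inv_apply, Measure.inv_apply, hpre, hΔmod _ hF.inv]

lemma isMulLeftInvariant_inv_withDensity (hΔ : Measurable Δ) (hΔpos : ∀ x, 0 < Δ x)
    (hΔhom : ∀ x y : G, Δ (x * y) = Δ x * Δ y)
    (hΔmod : ∀ E : Set G, MeasurableSet E → ∀ x : G,
      μ (E * {x}) = ENNReal.ofReal (Δ x) * μ E) :
    (μ.inv.withDensity fun x ↦ ENNReal.ofReal (Δ x)).IsMulLeftInvariant := by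
  refine ⟨fun g ↦ Measure.ext fun F hF ↦ ?_⟩
  have hD : Measurable fun x ↦ ENNReal.ofReal (Δ x) := ENNReal.measurable_ofReal.comp hΔ
  have hg : ENNReal.ofReal (Δ g) ≠ 0 := (ENNReal.ofReal_pos.mpr (hΔpos g)).ne'
  have hcancel : ∀ c : ℝ≥0∞, (ENNReal.ofReal (Δ g))⁻¹ * (ENNReal.ofReal (Δ g) * c) = c :=
    fun c ↦ by rw [← mul_assoc, ENNReal.inv_mul_cancel hg ENNReal.ofReal_ne_top, one_mul]
  rw [Measure.map_apply (measurable_const_mul g) hF,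
    withDensity_apply _ (hF.preimage (measurable_const_mul g)), withDensity_apply _ hF]
  calc ∫⁻ y in (g * ·) ⁻¹' F, ENNReal.ofReal (Δ y) ∂μ.inv
      = ∫⁻ y in (g * ·) ⁻¹' F, (ENNReal.ofReal (Δ g))⁻¹ * ENNReal.ofReal (Δ (g * y)) ∂μ.inv := by
        refine lintegral_congr fun y ↦ ?_
        rw [hΔhom, ENNReal.ofReal_mul (hΔpos g).le, hcancel]
    _ = (ENNReal.ofReal (Δ g))⁻¹ * ∫⁻ z in F, ENNReal.ofReal (Δ z) ∂μ.inv.map (g * ·) := by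
        rw [lintegral_const_mul (f := fun y ↦ ENNReal.ofReal (Δ (g * y))) _
            (hD.comp (measurable_const_mul g)),
          setLIntegral_map hF hD (measurable_const_mul g)]
    _ = ∫⁻ z in F, ENNReal.ofReal (Δ z) ∂μ.inv := by
        rw [map_mul_left_inv_eq_smul hΔmod, Measure.restrict_smul, lintegral_smul_measure,
          smul_eq_mul, hcancel]

end Modular

section Haar

variable {G : Type*} [Group G] [TopologicalSpace G] [IsTopologicalGroup G] [LocallyCompactSpace G]
  [T2Space G] [MeasurableSpace G] [BorelSpace G] {μ : Measure G} [μ.IsHaarMeasure] {Δ : G → ℝ}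

lemma measure_le_inv_apply_of_forall_le_one (hΔ : Continuous Δ) (hΔpos : ∀ x, 0 < Δ x)
    (hΔhom : ∀ x y : G, Δ (x * y) = Δ x * Δ y)
    (hΔmod : ∀ E : Set G, MeasurableSet E → ∀ x : G,
      μ (E * {x}) = ENNReal.ofReal (Δ x) * μ E)
    {A : Set G} (hA : IsCompact A) (hΔA : ∀ a ∈ A, Δ a ≤ 1) :
    μ A ≤ μ.inv A := by
  set ω := μ.inv.withDensity fun x ↦ ENNReal.ofReal (Δ x)
  have := isMulLeftInvariant_inv_withDensity hΔ.measurable hΔpos hΔhom hΔmod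
  have := IsLocallyFiniteMeasure.withDensity_ofReal (μ := μ.inv) hΔ
  obtain ⟨c, hc⟩ : ∃ c : ℝ≥0∞, ∀ s, IsCompact s → ω s = c * μ s :=
    ⟨_, fun s hs ↦ by
      simpa using Measure.measure_isMulInvariant_eq_smul_of_isCompact_closure ω μ
        (hs.isClosed.closure_eq.symm ▸ hs)⟩
  have hΔ_one : Δ 1 = 1 := by
    have h := hΔhom 1 1
    rw [one_mul] at h
    nlinarith [hΔpos 1]
  have hωA : c * μ A ≤ μ.inv A := by
    rw [← hc A hA, withDensity_apply _ hA.measurableSet]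
    calc ∫⁻ y in A, ENNReal.ofReal (Δ y) ∂μ.inv ≤ ∫⁻ _ in A, 1 ∂μ.inv :=
          setLIntegral_mono measurable_const fun y hy ↦ ENNReal.ofReal_le_one.mpr (hΔA y hy)
      _ = μ.inv A := setLIntegral_one _
  have hωA' : μ A ≤ c * μ.inv A := by
    rw [Measure.inv_apply, ← hc _ hA.inv, withDensity_apply _ hA.inv.measurableSet]
    calc μ A = ∫⁻ _ in A⁻¹, 1 ∂μ.inv := by rw [setLIntegral_one, Measure.inv_apply, inv_inv]
      _ ≤ ∫⁻ y in A⁻¹, ENNReal.ofReal (Δ y) ∂μ.inv := by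
        refine setLIntegral_mono (ENNReal.measurable_ofReal.comp hΔ.measurable) fun y hy ↦ ?_
        have h : Δ y * Δ y⁻¹ = 1 := by rw [← hΔhom, mul_inv_cancel, hΔ_one]
        rw [← ENNReal.ofReal_one]
        exact ENNReal.ofReal_le_ofReal (by nlinarith [hΔA _ hy, hΔpos y, hΔpos y⁻¹])
  -- `c` is squeezed: whichever side of `1` it lies on, one of the two bounds gives the claim
  rcases le_total c 1 with hc1 | hc1
  · exact hωA'.trans (mul_le_of_le_one_left' hc1)
  · exact (le_mul_of_one_le_left' hc1).trans hωA

end Haar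

end MeasureTheory

/-- **Measure of the approximate stabilizer (Proposition 4.?(i)).**
Let `μ` be a left Haar measure on a locally compact Hausdorff group `G`, `ν(E) = μ(E⁻¹)` the
associated right Haar measure, and `Δ` the modular function of `G`. Let `K ≥ 1` and let
`A ⊆ G` be compact with `μ(A) > 0`, `ν(A·A⁻¹) ≤ K·μ(A)`, and `max_{a ∈ A} Δ(a) = 1`.
Then the approximate stabilizer `S = {g : ν(A \ Ag) < (2K−1)·ν(A)/(2K)}` satisfies
`ν(S) ≥ μ(A)/(2K)`. -/
theorem approx_stabilizer_measure_lower_bound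
    {G : Type*} [Group G] [TopologicalSpace G] [IsTopologicalGroup G]
    [LocallyCompactSpace G] [T2Space G] [MeasurableSpace G] [BorelSpace G]
    (μ ν : Measure G) [μ.IsHaarMeasure] (hν : ∀ E : Set G, ν E = μ E⁻¹)
    (Δ : G → ℝ) (hΔpos : ∀ x, 0 < Δ x) (hΔcont : Continuous Δ)
    (hΔhom : ∀ x y : G, Δ (x * y) = Δ x * Δ y)
    (hΔmod : ∀ E : Set G, MeasurableSet E → ∀ x : G,
      μ (E * {x}) = ENNReal.ofReal (Δ x) * μ E)
    (K : ℝ) (hK : 1 ≤ K)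
    (A : Set G) (hAc : IsCompact A) (hA0 : 0 < μ A)
    (hAA : ν (A * A⁻¹) ≤ ENNReal.ofReal K * μ A)
    (hΔA : IsGreatest (Δ '' A) 1)
    (S : Set G)
    (hS : S = {g : G | ν (A \ (A * {g})) <
      ENNReal.ofReal ((2 * K - 1) / (2 * K)) * ν A}) :
    μ A / ENNReal.ofReal (2 * K) ≤ ν S := by
  obtain rfl : ν = μ.inv := Measure.ext fun E _ ↦ (hν E).trans (Measure.inv_apply μ E).symm
  have hK₀ : 0 < K := by linarith
  have hμν : μ A ≤ μ.inv A :=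
    measure_le_inv_apply_of_forall_le_one hΔcont hΔpos hΔhom hΔmod hAc fun a ha ↦ hΔA.2 ⟨a, ha, rfl⟩
  have hA_top : μ.inv A ≠ ⊤ := hAc.measure_ne_top
  have hA₀ : μ.inv A ≠ 0 := (hA0.trans_le hμν).ne'
  have hS_iff (g : G) :
      g ∈ S ↔ ENNReal.ofReal (1 / (2 * K)) * μ.inv A < μ.inv (A ∩ (A * {g})) := by
    rw [hS, mem_ofPred_eq]
    exact measure_sdiff_lt_iff _ (hAc.measurableSet.mul_singleton g) hA_top ENNReal.ofReal_ne_top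
      (ENNReal.ofReal_sub_one_div_add_ofReal_one_div (by linarith))
  have hS_inv : S⁻¹ = S := by
    ext g
    rw [mem_inv, hS_iff, hS_iff, measure_inter_mul_singleton_inv]
  have hS_one : (1 : G) ∈ S := by
    rw [hS_iff, singleton_one, mul_one, inter_self]
    refine ((ENNReal.mul_lt_mul_iff_left hA₀ hA_top).mpr ?_).trans_eq (one_mul _)
    exact ENNReal.ofReal_lt_one.mpr ((div_lt_one (by positivity)).mpr (by linarith))
  obtain ⟨F, hF_card, hcov⟩ := exists_finset_card_le_subset_biUnion_smul hS_one
    (fun g hg ↦ hS_inv ▸ inv_mem_inv.mpr hg) fun F hFA hF ↦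
      card_ne_floor_add_one_of_pairwise μ.inv hAc.measurableSet hA₀ hA_top hK₀
        (hAA.trans (by gcongr)) hFA (hF.imp fun b c h ↦ not_lt.mp (h ∘ (hS_iff _).mpr))
  refine ENNReal.div_le_of_le_mul' ?_
  calc μ A ≤ F.card * μ S := measure_le_card_mul_of_subset_biUnion_smul μ hcov
    _ ≤ ENNReal.ofReal (2 * K) * μ.inv S := by
      rw [Measure.inv_apply, hS_inv, ← ENNReal.ofReal_natCast]
      gcongr
      exact (Nat.cast_le.mpr hF_card).trans (Nat.floor_le (by positivity))
end
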